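/- arXiv:2210.12618 — 3 statements merged into one kernel-verified Lean document; each statement's English description precedes it below -/
import Mathlib

section
/- Let Σ be a d×d real symmetric positive semi-definite matrix with strictly positive entries. Fix i, define D_i = max over j,k ≠ i of (σ_ji σ_ki)/(σ_jk σ_ii), τ_{j,i} = σ_ji / sqrt(σ_ii · max(D_i,1)) for j ≠ i, and τ_{−i} the vector of these values. Then the matrix Σ^{(i)} = Σ^{(−i,−i)} − τ_{−i} τ_{−i}^T is positive semi-definite. -/
private lemma sum_split_ne {d : ℕ} (i : Fin d) (f : Fin d → ℝ) :
    ∑ j, f j = f i + ∑ j : {j : Fin d // j ≠ i}, f j.1 := by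
  classical
  rw [← Finset.sum_subtype (Finset.univ.erase i) (p := fun j => j ≠ i)
      (fun x => by simp) f]
  exact (Finset.add_sum_erase _ f (Finset.mem_univ i)).symm

/-- one peeling step preserves positive semi-definiteness.
`S` plays the role of Σ; the matrix `Σ^{(i)} = Σ^{(-i,-i)} - τ_{-i} τ_{-i}^T`,
indexed by the indices different from `i`, is positive semi-definite. -/
theorem peeling_step_posSemidef (d : ℕ) (S : Matrix (Fin d) (Fin d) ℝ)
    (hsymm : S.IsSymm) (hpos : ∀ j k, 0 < S j k) (hpsd : S.PosSemidef)
    (i : Fin d) (Di : ℝ)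
    (hD : IsGreatest {x : ℝ | ∃ j k : Fin d, j ≠ i ∧ k ≠ i ∧
      x = S j i * S k i / (S j k * S i i)} Di)
    (τ : Fin d → ℝ)
    (hτ : ∀ j, j ≠ i → τ j = S j i / Real.sqrt (S i i * max Di 1)) :
    Matrix.PosSemidef
      (Matrix.of fun (j k : {j : Fin d // j ≠ i}) => S j.1 k.1 - τ j.1 * τ k.1) := by
  classical
  have hM1 : (1:ℝ) ≤ max Di 1 := le_max_right _ _
  have hc : 0 < S i i := hpos i i
  have hcM : 0 < S i i * max Di 1 := mul_pos hc (lt_of_lt_of_le one_pos hM1)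
  set s := Real.sqrt (S i i * max Di 1) with hs
  have hs2 : s * s = S i i * max Di 1 := Real.mul_self_sqrt hcM.le
  have hspos : 0 < s := Real.sqrt_pos.mpr hcM
  refine Matrix.posSemidef_iff_dotProduct_mulVec.mpr ⟨?_, ?_⟩
  · ext j k
    simp only [Matrix.conjTranspose_apply, Matrix.of_apply, star_trivial]
    rw [hsymm.apply j.1 k.1]
    ring
  · intro x
    set b : ℝ := ∑ j : {j : Fin d // j ≠ i}, S j.1 i * x j with hb
    set A : ℝ := ∑ j : {j : Fin d // j ≠ i},
      x j * ∑ k : {k : Fin d // k ≠ i}, S j.1 k.1 * x k with hA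
    set t : ℝ := -b / S i i with ht
    set y : Fin d → ℝ := fun j => if h : j = i then t else x ⟨j, h⟩ with hy
    have hyi : y i = t := by simp [hy]
    have hyj : ∀ j : {j : Fin d // j ≠ i}, y j.1 = x j := fun j => by simp [hy, j.2]
    -- inner sums
    have hinner : ∀ r : Fin d, (∑ k, S r k * y k)
        = S r i * t + ∑ k : {k : Fin d // k ≠ i}, S r k.1 * x k := by
      intro r
      rw [sum_split_ne i (fun k => S r k * y k)]
      simp [hyi, hyj]
    have hbi : (∑ k : {k : Fin d // k ≠ i}, S i k.1 * x k) = b := by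
      rw [hb]
      exact Finset.sum_congr rfl fun k _ => by rw [← hsymm.apply i k.1]
    have hrow : ∀ j : {j : Fin d // j ≠ i},
        x j * (S j.1 i * t + ∑ k : {k : Fin d // k ≠ i}, S j.1 k.1 * x k)
        = (S j.1 i * x j) * t + x j * ∑ k : {k : Fin d // k ≠ i}, S j.1 k.1 * x k := by
      intro j; ring
    have hQ := hpsd.dotProduct_mulVec_nonneg y
    have hQexp : dotProduct (star y) (S.mulVec y) = S i i * t * t + b * t + (b * t + A) := by
      simp only [dotProduct, Matrix.mulVec, Pi.star_apply, star_trivial]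
      rw [sum_split_ne i (fun j => y j * ∑ k, S j k * y k)]
      rw [hinner i, hbi, hyi]
      have : (∑ j : {j : Fin d // j ≠ i}, y j.1 * ∑ k, S j.1 k * y k)
          = b * t + A := by
        have h1 : (∑ j : {j : Fin d // j ≠ i}, y j.1 * ∑ k, S j.1 k * y k)
            = ∑ j : {j : Fin d // j ≠ i},
              ((S j.1 i * x j) * t + x j * ∑ k : {k : Fin d // k ≠ i}, S j.1 k.1 * x k) := by
          refine Finset.sum_congr rfl fun j _ => ?_
          rw [hyj j, hinner j.1]; ring
        rw [h1, Finset.sum_add_distrib, ← Finset.sum_mul, hA, hb]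
      rw [this]
      ring
    rw [hQexp] at hQ
    have hAb : b * b / S i i ≤ A := by
      have hne : S i i ≠ 0 := ne_of_gt hc
      have : S i i * t * t + b * t + (b * t + A) = A - b * b / S i i := by
        rw [ht]; field_simp; ring
      rw [this] at hQ
      linarith
    -- the goal quadratic form
    have hT : (∑ k : {k : Fin d // k ≠ i}, τ k.1 * x k) = b / s := by
      rw [hb, Finset.sum_div]
      refine Finset.sum_congr rfl fun k _ => ?_
      rw [hτ k.1 k.2]; ring
    have hGexp : dotProduct (star x) ((Matrix.of fun (j k : {j : Fin d // j ≠ i}) =>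
        S j.1 k.1 - τ j.1 * τ k.1).mulVec x) = A - (b / s) * (b / s) := by
      simp only [dotProduct, Matrix.mulVec, Matrix.of_apply, Pi.star_apply,
        star_trivial]
      have step : ∀ j : {j : Fin d // j ≠ i},
          x j * (∑ k : {k : Fin d // k ≠ i}, (S j.1 k.1 - τ j.1 * τ k.1) * x k)
          = x j * (∑ k : {k : Fin d // k ≠ i}, S j.1 k.1 * x k)
            - (τ j.1 * x j) * (b / s) := by
        intro j
        have : (∑ k : {k : Fin d // k ≠ i}, (S j.1 k.1 - τ j.1 * τ k.1) * x k)
            = (∑ k : {k : Fin d // k ≠ i}, S j.1 k.1 * x k)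
              - τ j.1 * ∑ k : {k : Fin d // k ≠ i}, τ k.1 * x k := by
          rw [Finset.mul_sum, ← Finset.sum_sub_distrib]
          exact Finset.sum_congr rfl fun k _ => by ring
        rw [this, hT]; ring
      rw [Finset.sum_congr rfl fun j _ => step j, Finset.sum_sub_distrib, ← hA,
        ← Finset.sum_mul]
      have : (∑ j : {j : Fin d // j ≠ i}, τ j.1 * x j) = b / s := by
        rw [hb, Finset.sum_div]
        refine Finset.sum_congr rfl fun k _ => ?_
        rw [hτ k.1 k.2]; ring
      rw [this]
    rw [hGexp]
    have hbb : (b / s) * (b / s) = b * b / (S i i * max Di 1) := by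
      rw [div_mul_div_comm, hs2]
    rw [hbb]
    have hle : b * b / (S i i * max Di 1) ≤ b * b / S i i := by
      gcongr
      · exact mul_self_nonneg b
      · exact le_mul_of_one_le_right hc.le hM1
    linarith
end

section
/- Let Σ be a d×d symmetric positive semi-definite matrix with positive entries, fix i = 1, and suppose a nonnegative (d−1)×(q−1) matrix B satisfies B B^T = Σ^{(1)} := Σ^{(−1,−1)} − τ_{−1} τ_{−1}^T, where τ is defined via D_1 = max_{j,k ≠ 1} σ_j1 σ_k1/(σ_jk σ_11), τ_{1,1} = sqrt(σ_11 max(D_1,1)), τ_{j,1} = σ_j1/τ_{1,1}. Then the d×q block matrix A with first column (τ_{1,1}, τ_{2,1}, …, τ_{d,1})^T, first row (τ_{1,1}, 0, …, 0), and lower-right block B satisfies: (A A^T)_{jk} = σ_{jk} for all (j,k) ≠ (1,1), and (A A^T)_{11} = σ_{11} max(D_1, 1) ≥ σ_{11}. -/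
open Matrix

/-!
Writing `A = [τ | (0; B)]`, each entry of `A Aᵀ` is `τ j τ k` plus the inner product of the
rows of `(0; B)`. That inner product vanishes when `j` or `k` is the pivot, and equals
`σ_jk - τ_j τ_k` otherwise by the hypothesis on `B Bᵀ`. The remaining entries are
`τ_1 τ_k = σ_k1` by the choice of `τ_k`, and `τ_1² = σ_11 max(D_1, 1)`.
-/

section PeelBlock

variable {ι R : Type*} [CommSemiring R] {q : ℕ} [NeZero q]

theorem mul_transpose_apply_eq_add_sum_ne_zero [Fintype ι] (A : Matrix ι (Fin q) R) (j k : ι) :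
    (A * Aᵀ) j k = A j 0 * A k 0 + ∑ l ∈ Finset.univ.filter (fun l : Fin q => l ≠ 0),
      A j l * A k l := by
  rw [mul_apply, Finset.filter_ne']
  exact (Finset.add_sum_erase _ (fun l => A j l * A k l) (Finset.mem_univ 0)).symm

/-- `B` has the shape of the whole matrix; its pivot row and first column are ignored. -/
def peelBlock [DecidableEq ι] (i : ι) (τ : ι → R) (B : Matrix ι (Fin q) R) :
    Matrix ι (Fin q) R :=
  fun j l => if l = 0 then τ j else if j = i then 0 else B j l

theorem peelBlock_mul_transpose_apply [Fintype ι] [DecidableEq ι] (i : ι) (τ : ι → R)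
    (B : Matrix ι (Fin q) R) (j k : ι) :
    (peelBlock i τ B * (peelBlock i τ B)ᵀ) j k = τ j * τ k +
      if j = i ∨ k = i then 0
      else ∑ l ∈ Finset.univ.filter (fun l : Fin q => l ≠ 0), B j l * B k l := by
  rw [mul_transpose_apply_eq_add_sum_ne_zero]
  simp only [peelBlock, if_true]
  congr 1
  by_cases h : j = i ∨ k = i
  · rw [if_pos h]
    refine Finset.sum_eq_zero fun l hl => ?_
    rcases h with rfl | rfl <;> simp [(Finset.mem_filter.1 hl).2]
  · rw [if_neg h]
    obtain ⟨hj, hk⟩ := not_or.1 h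
    refine Finset.sum_congr rfl fun l hl => ?_
    simp [(Finset.mem_filter.1 hl).2, hj, hk]

end PeelBlock

theorem pos_and_mul_self_of_eq_sqrt_mul_max_one {s D t : ℝ} (hs : 0 < s)
    (ht : t = √(s * max D 1)) : 0 < t ∧ t * t = s * max D 1 := by
  have hprod : 0 < s * max D 1 := mul_pos hs (one_pos.trans_le (le_max_right D 1))
  subst ht
  exact ⟨Real.sqrt_pos.2 hprod, Real.mul_self_sqrt hprod.le⟩

theorem peeled_block_reassembly_general (d q : ℕ) [NeZero d] [NeZero q]
    (S : Matrix (Fin d) (Fin d) ℝ)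
    (hsymm : S.IsSymm) (hpos : ∀ j k, 0 < S j k)
    (D1 : ℝ)
    (τ : Fin d → ℝ)
    (hτ0 : τ 0 = Real.sqrt (S 0 0 * max D1 1))
    (hτ : ∀ j, j ≠ 0 → τ j = S j 0 / τ 0)
    (B : Matrix (Fin d) (Fin q) ℝ)
    (hB : ∀ j k : Fin d, j ≠ 0 → k ≠ 0 →
      ∑ l ∈ Finset.univ.filter (fun l : Fin q => l ≠ 0), B j l * B k l
        = S j k - τ j * τ k)
    (A : Matrix (Fin d) (Fin q) ℝ)
    (hA : ∀ j l, A j l = if l = 0 then τ j else if j = 0 then 0 else B j l) :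
    (∀ j k : Fin d, ¬(j = 0 ∧ k = 0) → (A * Aᵀ) j k = S j k)
      ∧ (A * Aᵀ) 0 0 = S 0 0 * max D1 1
      ∧ S 0 0 ≤ (A * Aᵀ) 0 0 := by
  obtain ⟨hτ0_pos, hτ0_sq⟩ := pos_and_mul_self_of_eq_sqrt_mul_max_one (hpos 0 0) hτ0
  have hτ_pivot (k : Fin d) (hk : k ≠ 0) : τ 0 * τ k = S k 0 := by
    rw [hτ k hk, mul_div_cancel₀ _ hτ0_pos.ne']
  obtain rfl : A = peelBlock 0 τ B := funext₂ hA
  have hAA := peelBlock_mul_transpose_apply 0 τ B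
  have hdiag : (peelBlock 0 τ B * (peelBlock 0 τ B)ᵀ) 0 0 = S 0 0 * max D1 1 := by
    simp [hAA, hτ0_sq]
  refine ⟨fun j k hjk => ?_, hdiag, ?_⟩
  · by_cases hj : j = 0
    · have hk : k ≠ 0 := fun hk => hjk ⟨hj, hk⟩
      simp [hAA, hj, hτ_pivot k hk, hsymm.apply k 0]
    by_cases hk : k = 0
    · simp [hAA, hk, mul_comm (τ j), hτ_pivot j hj]
    · simp [hAA, hj, hk, hB j k hj hk]
  · rw [hdiag]
    exact le_mul_of_one_le_right (hpos 0 0).le (le_max_right D1 1)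

/-- reassembling the peeled matrix.  With `i = 1` (index `0` in `Fin d`),
if a nonnegative matrix `B` (indexed by the nonzero rows/columns) satisfies
`B Bᵀ = Σ^{(1)}`, then the block matrix `A` with first column `τ`, first row
`(τ_{1,1}, 0, …, 0)` and lower-right block `B` satisfies `(A Aᵀ)_{jk} = σ_{jk}`
for `(j,k) ≠ (1,1)` and `(A Aᵀ)_{11} = σ_{11} max(D_1,1) ≥ σ_{11}`. -/
theorem peeled_block_reassembly (d q : ℕ) [NeZero d] [NeZero q]
    (S : Matrix (Fin d) (Fin d) ℝ)
    (hsymm : S.IsSymm) (hpos : ∀ j k, 0 < S j k) (hpsd : S.PosSemidef)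
    (D1 : ℝ)
    (hD : IsGreatest {x : ℝ | ∃ j k : Fin d, j ≠ 0 ∧ k ≠ 0 ∧
      x = S j 0 * S k 0 / (S j k * S 0 0)} D1)
    (τ : Fin d → ℝ)
    (hτ0 : τ 0 = Real.sqrt (S 0 0 * max D1 1))
    (hτ : ∀ j, j ≠ 0 → τ j = S j 0 / τ 0)
    (B : Matrix (Fin d) (Fin q) ℝ)
    (hBnn : ∀ j l, 0 ≤ B j l)
    (hB : ∀ j k : Fin d, j ≠ 0 → k ≠ 0 →
      ∑ l ∈ Finset.univ.filter (fun l : Fin q => l ≠ 0), B j l * B k l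
        = S j k - τ j * τ k)
    (A : Matrix (Fin d) (Fin q) ℝ)
    (hA : ∀ j l, A j l = if l = 0 then τ j else if j = 0 then 0 else B j l) :
    (∀ j k : Fin d, ¬(j = 0 ∧ k = 0) → (A * Aᵀ) j k = S j k)
      ∧ (A * Aᵀ) 0 0 = S 0 0 * max D1 1
      ∧ S 0 0 ≤ (A * Aᵀ) 0 0 :=
  peeled_block_reassembly_general d q S hsymm hpos D1 τ hτ0 hτ B hB A hA
end

section
/- Let A be a d×d lower-triangular matrix with nonnegative entries and strictly positive diagonal entries, α > 0, and Σ = A A^T. Then the iterative peeling algorithm applied along the canonical path 1 ↦ 2 ↦ … ↦ d (at each step k taking D < 1, so τ equals the appropriate scaled column, and subtracting the rank-one term) produces a matrix A_* equal to A; in particular A_* A_*^T = Σ, i.e. the algorithm yields an exact completely positive decomposition. -/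
open Matrix

/-- `D_1(S) = max_{j,k ≠ 1} S_{j1} S_{k1} / (S_{jk} S_{11})` (with `0` inserted so
that the maximum is well defined also in the degenerate `1 × 1` case; for matrices
with positive entries all ratios are positive, so this does not change the value). -/
noncomputable def peelD {m : ℕ} (S : Matrix (Fin (m + 1)) (Fin (m + 1)) ℝ) : ℝ :=
  (insert (0 : ℝ)
    (((Finset.univ ×ˢ Finset.univ).filter
        (fun p : Fin (m + 1) × Fin (m + 1) => p.1 ≠ 0 ∧ p.2 ≠ 0)).image
      (fun p => S p.1 0 * S p.2 0 / (S p.1 p.2 * S 0 0)))).max' (by simp)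

/-- The vector `τ` of a peeling step at index `1`:
`τ_1 = √(S_{11} max(D_1,1))`, `τ_j = S_{j1}/√(S_{11} max(D_1,1))` for `j ≠ 1`. -/
noncomputable def peelTau {m : ℕ} (S : Matrix (Fin (m + 1)) (Fin (m + 1)) ℝ) :
    Fin (m + 1) → ℝ :=
  fun j =>
    if j = 0 then Real.sqrt (S 0 0 * max (peelD S) 1)
    else S j 0 / Real.sqrt (S 0 0 * max (peelD S) 1)

/-- The peeled remainder `S' = S^{(-1,-1)} - τ_{-1} τ_{-1}ᵀ`. -/
noncomputable def peelRem {m : ℕ} (S : Matrix (Fin (m + 1)) (Fin (m + 1)) ℝ) :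
    Matrix (Fin m) (Fin m) ℝ :=
  Matrix.of fun j k => S j.succ k.succ - peelTau S j.succ * peelTau S k.succ

/-- The iterative peeling algorithm along the canonical path `1 ↦ 2 ↦ … ↦ d`:
the first column of the output is `τ`, and the lower-right block is obtained by
applying the algorithm to the peeled remainder. -/
noncomputable def peelAlg : (m : ℕ) → Matrix (Fin m) (Fin m) ℝ → Matrix (Fin m) (Fin m) ℝ
  | 0, _ => 0
  | m + 1, S =>
      Matrix.of fun j k =>
        if hk : k = 0 then peelTau S j
        else if hj : j = 0 then 0
        else peelAlg m (peelRem S) (j.pred hj) (k.pred hk)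

/-! Since `A` is lower triangular, the first column of `Σ = A Aᵀ` is `A₁₁` times the first
column of `A`, and `Σ_{jk} ≥ A_{j1} A_{k1}` by nonnegativity; hence `D₁ ≤ 1`, the vector `τ` is
the first column of `A`, and the remainder is `A' A'ᵀ` for the trailing block `A'` of `A`, which
is again lower triangular, nonnegative, with positive diagonal. Induct on the dimension. -/

section Peeling

variable {m : ℕ}

lemma peelD_le_one {S : Matrix (Fin (m + 1)) (Fin (m + 1)) ℝ} (hS : ∀ j k, 0 ≤ S j k)
    (h : ∀ j k, S j 0 * S k 0 ≤ S j k * S 0 0) : peelD S ≤ 1 := by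
  refine Finset.max'_le _ _ _ ?_
  simp only [Finset.mem_insert, Finset.mem_image]
  rintro _ (rfl | ⟨⟨j, k⟩, -, rfl⟩)
  · exact zero_le_one
  · exact div_le_one_of_le₀ (h j k) (mul_nonneg (hS j k) (hS 0 0))

lemma peelTau_eq_div_sqrt {S : Matrix (Fin (m + 1)) (Fin (m + 1)) ℝ} (hD : peelD S ≤ 1) :
    peelTau S = fun j => S j 0 / √(S 0 0) := by
  funext j
  rw [peelTau, max_eq_right hD, mul_one]
  split_ifs with hj
  · subst hj
    exact (Real.div_sqrt).symm
  · rfl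

lemma peelRem_mul_transpose {A : Matrix (Fin (m + 1)) (Fin (m + 1)) ℝ}
    (hτ : peelTau (A * Aᵀ) = fun j => A j 0) :
    peelRem (A * Aᵀ) = A.submatrix Fin.succ Fin.succ * (A.submatrix Fin.succ Fin.succ)ᵀ := by
  ext j k
  simp only [peelRem, hτ, of_apply, mul_apply, transpose_apply, submatrix_apply,
    Fin.sum_univ_succ]
  ring

lemma peelAlg_succ_eq {S A : Matrix (Fin (m + 1)) (Fin (m + 1)) ℝ}
    (hτ : peelTau S = fun j => A j 0) (hrow : ∀ k, k ≠ 0 → A 0 k = 0)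
    (hrem : peelAlg m (peelRem S) = A.submatrix Fin.succ Fin.succ) : peelAlg (m + 1) S = A := by
  ext j k
  rw [peelAlg, of_apply]
  split_ifs with hk hj
  · rw [hk, hτ]
  · rw [hj, hrow k hk]
  · rw [hrem, submatrix_apply, Fin.succ_pred, Fin.succ_pred]

end Peeling

section LowerTriangular

variable {m : ℕ} {A : Matrix (Fin (m + 1)) (Fin (m + 1)) ℝ}

lemma mul_transpose_apply_zero (hrow : ∀ k, k ≠ 0 → A 0 k = 0) (j : Fin (m + 1)) :
    (A * Aᵀ) j 0 = A j 0 * A 0 0 := by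
  rw [mul_apply]
  refine Finset.sum_eq_single 0 (fun l _ hl => ?_) (by simp)
  rw [transpose_apply, hrow l hl, mul_zero]

lemma peelTau_mul_transpose (hrow : ∀ k, k ≠ 0 → A 0 k = 0) (hnn : ∀ j k, 0 ≤ A j k)
    (hpos : 0 < A 0 0) : peelTau (A * Aᵀ) = fun j => A j 0 := by
  have hcol := mul_transpose_apply_zero hrow
  have hS : ∀ j k, 0 ≤ (A * Aᵀ) j k := fun j k => by
    rw [mul_apply]
    exact Finset.sum_nonneg fun l _ => mul_nonneg (hnn j l) (hnn k l)
  have hCS : ∀ j k, (A * Aᵀ) j 0 * (A * Aᵀ) k 0 ≤ (A * Aᵀ) j k * (A * Aᵀ) 0 0 := by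
    intro j k
    have hle : A j 0 * A k 0 ≤ (A * Aᵀ) j k :=
      Finset.single_le_sum (f := fun l => A j l * Aᵀ l k)
        (fun l _ => mul_nonneg (hnn j l) (hnn k l)) (Finset.mem_univ 0)
    calc (A * Aᵀ) j 0 * (A * Aᵀ) k 0 = A j 0 * A k 0 * (A 0 0 * A 0 0) := by
          rw [hcol, hcol]; ring
      _ ≤ (A * Aᵀ) j k * (A * Aᵀ) 0 0 := by
          rw [hcol]; exact mul_le_mul_of_nonneg_right hle (mul_self_nonneg _)
  rw [peelTau_eq_div_sqrt (peelD_le_one hS hCS)]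
  funext j
  rw [hcol, hcol, Real.sqrt_mul_self hpos.le, mul_div_cancel_right₀ _ hpos.ne']

end LowerTriangular

theorem peelAlg_mul_transpose_self (d : ℕ) (A : Matrix (Fin d) (Fin d) ℝ)
    (htri : ∀ j k : Fin d, j < k → A j k = 0) (hnn : ∀ j k, 0 ≤ A j k)
    (hdiag : ∀ j, 0 < A j j) : peelAlg d (A * Aᵀ) = A := by
  induction d with
  | zero => ext j; exact j.elim0
  | succ m ih =>
    have hrow : ∀ k, k ≠ 0 → A 0 k = 0 := fun k hk => htri 0 k (Fin.pos_of_ne_zero hk)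
    have hτ := peelTau_mul_transpose hrow hnn (hdiag 0)
    refine peelAlg_succ_eq hτ hrow ?_
    rw [peelRem_mul_transpose hτ]
    exact ih _ (fun j k h => htri _ _ (Fin.succ_lt_succ_iff.mpr h)) (fun _ _ => hnn _ _)
      (fun _ => hdiag _)

/-- Proposition 3.2: if `Σ = A Aᵀ` with `A` lower triangular,
nonnegative and with strictly positive diagonal, then the peeling algorithm along
the canonical path recovers `A` exactly; in particular `A_* A_*ᵀ = Σ`, an exact
completely positive decomposition. -/
theorem peelAlg_recovers_lowerTriangular (d : ℕ)
    (A : Matrix (Fin d) (Fin d) ℝ)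
    (htri : ∀ j k : Fin d, j < k → A j k = 0)
    (hnn : ∀ j k, 0 ≤ A j k)
    (hdiag : ∀ j, 0 < A j j) :
    peelAlg d (A * Aᵀ) = A ∧ peelAlg d (A * Aᵀ) * (peelAlg d (A * Aᵀ))ᵀ = A * Aᵀ := by
  have hA := peelAlg_mul_transpose_self d A htri hnn hdiag
  exact ⟨hA, by rw [hA]⟩
end
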